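/- arXiv:2311.11993 — 2 statements merged into one kernel-verified Lean document; each statement's English description precedes it below -/
import Mathlib

section
/- Fix α ∈ (2/3, 1). Then α·p_c + (1 − α)/2 = (1 − √(α·(3α−2)))/2; in particular the normalising constant c_α := 2/(1 − √(α·(3α−2))) satisfies c_α ∈ (0, ∞) and c_α^{−1} = α·p_c + (1/2)·∑_{m=1}^∞ p_m. -/
/-- The peeling probability `p_m` for a hyperbolic half-planar triangulation with
parameter `α`:  `p_m = (2/4^m) ((2m-2)!/((m-1)!(m+1)!)) (2/α - 2)^m ((3α-2)m + 1)`. -/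
noncomputable def peelP (α : ℝ) (m : ℕ) : ℝ :=
  (2 / 4 ^ m) *
    ((Nat.factorial (2 * m - 2) : ℝ) /
      ((Nat.factorial (m - 1) : ℝ) * (Nat.factorial (m + 1) : ℝ))) *
    (2 / α - 2) ^ m * ((3 * α - 2) * m + 1)

/-- The critical site-percolation probability `p_c = (1/2)(1 - √(3 - 2/α))`. -/
noncomputable def pcrit (α : ℝ) : ℝ := (1 / 2) * (1 - Real.sqrt (3 - 2 / α))

/-- The normalising constant `c_α = 2/(1 - √(α(3α-2)))`. -/
noncomputable def cAlpha (α : ℝ) : ℝ := 2 / (1 - Real.sqrt (α * (3 * α - 2)))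

/-- The increment law `μ` of the peeling random walk: `μ(1) = c_α α p_c`,
`μ(-m) = (1/2) c_α p_m` for `m ≥ 1`, and `μ(i) = 0` otherwise. -/
noncomputable def incLaw (α : ℝ) : ℤ → ℝ := fun i =>
  if i = 1 then cAlpha α * α * pcrit α
  else if i ≤ -1 then (1 / 2) * cAlpha α * peelP α (-i).toNat
  else 0

/-! With `r = (1 - α) / (2α)` and `C_n` the Catalan numbers, the peeling probabilities telescope:
`p_{m+1} = T_m - T_{m+1}` for `T_n = (1 - α) rⁿ C_n`. Since `C_n ≤ 4ⁿ` and `4r < 1` exactly when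
`α > 2/3`, `T_n → 0`, so `∑ p_m = T_0 = 1 - α`. The remaining identities come down to
`α √(3 - 2/α) = √(α (3α - 2))`. -/

open Filter Topology

theorem catalan_mul_factorial_mul_factorial (n : ℕ) :
    catalan n * (n.factorial * (n + 1).factorial) = (2 * n).factorial := by
  have hchoose := Nat.choose_mul_factorial_mul_factorial (Nat.le_mul_of_pos_left n two_pos)
  rw [show 2 * n - n = n by omega, ← Nat.centralBinom_eq_two_mul_choose,
    ← succ_mul_catalan_eq_centralBinom] at hchoose
  rw [← hchoose, Nat.factorial_succ]
  ring

theorem catalan_le_four_pow (n : ℕ) : catalan n ≤ 4 ^ n :=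
  calc catalan n ≤ (n + 1) * catalan n := Nat.le_mul_of_pos_left _ n.succ_pos
    _ = n.centralBinom := succ_mul_catalan_eq_centralBinom n
    _ ≤ 4 ^ n := Nat.centralBinom_le_four_pow n

theorem succ_succ_mul_catalan_succ (n : ℕ) :
    (n + 2) * catalan (n + 1) = 2 * (2 * n + 1) * catalan n := by
  have h := Nat.succ_mul_centralBinom_succ n
  rw [← succ_mul_catalan_eq_centralBinom, ← succ_mul_catalan_eq_centralBinom] at h
  exact Nat.eq_of_mul_eq_mul_left n.succ_pos (by linarith)

theorem hasSum_sub_succ_of_antitone {f : ℕ → ℝ} {l : ℝ} (hf : Antitone f)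
    (hl : Tendsto f atTop (𝓝 l)) : HasSum (fun n => f n - f (n + 1)) (f 0 - l) := by
  rw [hasSum_iff_tendsto_nat_of_nonneg fun n => sub_nonneg.2 (hf n.le_succ)]
  simp only [Finset.sum_range_sub']
  exact tendsto_const_nhds.sub hl

noncomputable def peelTail (α : ℝ) (n : ℕ) : ℝ :=
  (1 - α) * ((1 - α) / (2 * α)) ^ n * catalan n

theorem peelTail_zero (α : ℝ) : peelTail α 0 = 1 - α := by
  simp [peelTail]

theorem peelP_succ_eq_peelTail_sub {α : ℝ} (hα : α ≠ 0) (m : ℕ) :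
    peelP α (m + 1) = peelTail α m - peelTail α (m + 1) := by
  have hcat :
      ((2 * m).factorial : ℝ) / (m.factorial * (m + 2).factorial) = catalan m / (m + 2) := by
    rw [← catalan_mul_factorial_mul_factorial, Nat.factorial_succ (m + 1)]
    push_cast
    field_simp
    ring
  have hsucc : (catalan (m + 1) : ℝ) = 2 * (2 * m + 1) * catalan m / (m + 2) := by
    rw [eq_div_iff (by positivity), mul_comm]
    exact_mod_cast succ_succ_mul_catalan_succ m
  have hbase : 2 / α - 2 = 4 * ((1 - α) / (2 * α)) := by
    field_simp
    ring
  rw [peelP, show 2 * (m + 1) - 2 = 2 * m by omega, Nat.add_sub_cancel, hcat, hbase,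
    peelTail, peelTail, hsucc, mul_pow, pow_succ, pow_succ]
  push_cast
  field_simp
  ring

theorem peelP_succ_nonneg {α : ℝ} (h₁ : 2 / 3 ≤ α) (h₂ : α ≤ 1) (m : ℕ) :
    0 ≤ peelP α (m + 1) := by
  have hbase : 0 ≤ 2 / α - 2 := by
    rw [sub_nonneg, le_div_iff₀ (by linarith)]
    linarith
  have hlin : 0 ≤ (3 * α - 2) * ((m + 1 : ℕ) : ℝ) + 1 := by
    have : 0 ≤ 3 * α - 2 := by linarith
    positivity
  unfold peelP
  positivity

theorem tendsto_peelTail_zero {α : ℝ} (h₁ : 2 / 3 < α) (h₂ : α ≤ 1) :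
    Tendsto (peelTail α) atTop (𝓝 0) := by
  have hα : 0 < α := by linarith
  have hgeo : Tendsto (fun n : ℕ => (1 - α) * (2 * (1 - α) / α) ^ n) atTop (𝓝 0) := by
    simpa using (tendsto_pow_atTop_nhds_zero_of_lt_one
      (div_nonneg (by linarith) hα.le) ((div_lt_one hα).2 (by linarith))).const_mul (1 - α)
  refine squeeze_zero (fun n => ?_) (fun n => ?_) hgeo
  · unfold peelTail
    have : 0 ≤ 1 - α := by linarith
    positivity
  · calc peelTail α n ≤ (1 - α) * ((1 - α) / (2 * α)) ^ n * 4 ^ n := by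
          unfold peelTail
          gcongr
          exact_mod_cast catalan_le_four_pow n
      _ = (1 - α) * (2 * (1 - α) / α) ^ n := by
          rw [mul_assoc, ← mul_pow]
          congr 2
          field_simp
          ring

theorem hasSum_peelP_succ {α : ℝ} (hα : α ∈ Set.Ioo (2 / 3 : ℝ) 1) :
    HasSum (fun m : ℕ => peelP α (m + 1)) (1 - α) := by
  have htel := peelP_succ_eq_peelTail_sub (α := α) (by linarith [hα.1])
  have hanti : Antitone (peelTail α) := antitone_nat_of_succ_le fun n => by
    linarith [htel n, peelP_succ_nonneg hα.1.le hα.2.le n]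
  simpa only [htel, peelTail_zero, sub_zero] using
    hasSum_sub_succ_of_antitone hanti (tendsto_peelTail_zero hα.1 hα.2.le)

theorem mul_pcrit_add_half_one_sub {α : ℝ} (hα : 0 < α) :
    α * pcrit α + (1 - α) / 2 = (1 - Real.sqrt (α * (3 * α - 2))) / 2 := by
  have hsqrt : α * Real.sqrt (3 - 2 / α) = Real.sqrt (α * (3 * α - 2)) := by
    rw [show α * (3 * α - 2) = α ^ 2 * (3 - 2 / α) by field_simp,
      Real.sqrt_mul (sq_nonneg α), Real.sqrt_sq hα.le]
  rw [pcrit, ← hsqrt]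
  ring

theorem cAlpha_pos {α : ℝ} (h : α * (3 * α - 2) < 1) : 0 < cAlpha α := by
  have : Real.sqrt (α * (3 * α - 2)) < 1 := (Real.sqrt_lt' one_pos).2 (by simpa using h)
  exact div_pos two_pos (by linarith)

/-- `α p_c + (1-α)/2 = (1 - √(α(3α-2)))/2`; in particular the normalising constant
`c_α = 2/(1 - √(α(3α-2)))` is positive and satisfies
`c_α⁻¹ = α p_c + (1/2) ∑_{m=1}^∞ p_m`. -/
theorem cAlpha_normalisation (α : ℝ) (hα : α ∈ Set.Ioo (2 / 3 : ℝ) 1) :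
    α * pcrit α + (1 - α) / 2 = (1 - Real.sqrt (α * (3 * α - 2))) / 2 ∧
    0 < cAlpha α ∧
    (cAlpha α)⁻¹ = α * pcrit α + (1 / 2) * ∑' m : ℕ, peelP α (m + 1) := by
  obtain ⟨hα₁, hα₂⟩ := hα
  have hmass := mul_pcrit_add_half_one_sub (α := α) (by linarith)
  refine ⟨hmass, cAlpha_pos (by nlinarith), ?_⟩
  rw [(hasSum_peelP_succ ⟨hα₁, hα₂⟩).tsum_eq, cAlpha, inv_div]
  linarith
end

section
/- Fix α ∈ (2/3, 1). Let μ_∘(m) := p_m/(1 − α) for integers m ≥ 1, and let μ_•(m) := q·(1−q)^m for integers m ≥ 0, where q := 2αp_c/(1 − α + 2αp_c). Then ∑_{m≥1} m·μ_∘(m) = 2αp_c/(1 − α), ∑_{m≥0} m·μ_•(m) = (1 − α)/(2αp_c), and consequently (∑_{m≥1} m·μ_∘(m)) · (∑_{m≥0} m·μ_•(m)) = 1; that is, the two-type offspring distributions are critical. -/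
open scoped Nat

open Nat (centralBinom)

open Polynomial

theorem centralBinom_mul_factorial_eq_descPochhammer (n : ℕ) :
    ((centralBinom n * n ! : ℕ) : ℝ) =
      (-4) ^ n * (descPochhammer ℤ n).smeval (-1 / 2 : ℝ) := by
  induction n with
  | zero => simp
  | succ n ih =>
    rw [descPochhammer_succ_right, smeval_mul, smeval_sub, smeval_X, smeval_natCast, pow_succ,
      mul_mul_mul_comm, ← ih, Nat.factorial_succ, ← mul_assoc, mul_comm _ (n + 1),
      Nat.succ_mul_centralBinom_succ]
    push_cast
    ring

theorem centralBinom_eq_neg_four_pow_mul_choose (n : ℕ) :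
    (centralBinom n : ℝ) = (-4) ^ n * Ring.choose (-1 / 2 : ℝ) n := by
  rw [Ring.choose_eq_smul, smul_eq_mul, mul_left_comm,
    ← centralBinom_mul_factorial_eq_descPochhammer]
  push_cast
  field_simp

theorem hasSum_centralBinom_mul_pow {t : ℝ} (ht : |t| < 1 / 4) :
    HasSum (fun n ↦ (centralBinom n : ℝ) * t ^ n) (√(1 - 4 * t))⁻¹ := by
  have hy : -4 * t ∈ Metric.eball (0 : ℝ) 1 := by
    rw [Metric.mem_eball, edist_dist, ENNReal.ofReal_lt_one, _root_.dist_zero_right,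
      Real.norm_eq_abs, abs_mul]
    norm_num
    linarith
  have hsum := (Real.one_add_rpow_hasFPowerSeriesOnBall_zero (a := -1 / 2)).hasSum_sub hy
  simp only [binomialSeries, FormalMultilinearSeries.ofScalars_apply_eq, sub_zero,
    smul_eq_mul] at hsum
  have hval : (√(1 - 4 * t))⁻¹ = (1 + -4 * t) ^ (-1 / 2 : ℝ) := by
    rw [Real.sqrt_eq_rpow, ← Real.rpow_neg (by linarith [abs_lt.1 ht])]
    ring_nf
  have hterm : (fun n ↦ (centralBinom n : ℝ) * t ^ n) =
      fun n ↦ Ring.choose (-1 / 2 : ℝ) n * (-4 * t) ^ n := by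
    ext n
    rw [centralBinom_eq_neg_four_pow_mul_choose, mul_pow]
    ring
  rw [hval, hterm]
  exact hsum

theorem catalan_eq_two_mul_centralBinom_sub (n : ℕ) :
    (catalan n : ℝ) = 2 * centralBinom n - centralBinom (n + 1) / 2 := by
  have h₁ : ((n : ℝ) + 1) * centralBinom (n + 1) = 2 * (2 * n + 1) * centralBinom n := by
    exact_mod_cast Nat.succ_mul_centralBinom_succ n
  have h₂ : ((n : ℝ) + 1) * catalan n = centralBinom n := by
    exact_mod_cast succ_mul_catalan_eq_centralBinom n
  apply mul_left_cancel₀ (by positivity : (n : ℝ) + 1 ≠ 0)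
  linear_combination h₂ + h₁ / 2

theorem hasSum_catalan_mul_pow {t : ℝ} (ht : |t| < 1 / 4) (ht₀ : t ≠ 0) :
    HasSum (fun n ↦ (catalan n : ℝ) * t ^ n) ((1 - √(1 - 4 * t)) / (2 * t)) := by
  have hG := hasSum_centralBinom_mul_pow ht
  have hshift : HasSum (fun n ↦ (centralBinom (n + 1) : ℝ) * t ^ n)
      (((√(1 - 4 * t))⁻¹ - 1) / t) := by
    have := ((hasSum_nat_add_iff' 1).2 hG).div_const t
    simp only [Finset.sum_range_one, pow_zero, Nat.centralBinom_zero, Nat.cast_one, mul_one] at this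
    refine this.congr_fun fun n ↦ ?_
    field_simp
    ring
  have hσ : 0 < 1 - 4 * t := by linarith [abs_lt.1 ht]
  have hσ₀ : 0 < √(1 - 4 * t) := Real.sqrt_pos.2 hσ
  have hσ₂ : √(1 - 4 * t) ^ 2 = 1 - 4 * t := Real.sq_sqrt hσ.le
  have hval : (1 - √(1 - 4 * t)) / (2 * t) =
      2 * (√(1 - 4 * t))⁻¹ - ((√(1 - 4 * t))⁻¹ - 1) / t / 2 := by
    field_simp
    linear_combination -hσ₂
  rw [hval]
  refine ((hG.mul_left 2).sub (hshift.div_const 2)).congr_fun fun n ↦ ?_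
  rw [catalan_eq_two_mul_centralBinom_sub]
  ring

theorem centralBinom_mul_factorial_mul_factorial (m : ℕ) :
    centralBinom m * m ! * m ! = (2 * m)! := by
  rw [Nat.centralBinom_eq_two_mul_choose, two_mul, Nat.add_choose_mul_factorial_mul_factorial]

/- Since `(3α - 2)(m + 1) + 1 = (3α - 2)(m + 2) + 3(1 - α)` and
`6 C(2m, m) / (m + 2) = 2 Cat m + Cat (m + 1)`. -/
theorem succ_mul_peelP_succ {α t : ℝ} (ht : 2 / α - 2 = 4 * t) (m : ℕ) :
    ((m + 1 : ℕ) : ℝ) * peelP α (m + 1) =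
      2 * (3 * α - 2) * t * (centralBinom m * t ^ m) +
        (1 - α) * (2 * t * (catalan m * t ^ m) + catalan (m + 1) * t ^ (m + 1)) := by
  have hcb : ((2 * m)! : ℝ) = centralBinom m * m ! * m ! := by
    exact_mod_cast (centralBinom_mul_factorial_mul_factorial m).symm
  have hcat₀ : ((m : ℝ) + 1) * catalan m = centralBinom m := by
    exact_mod_cast succ_mul_catalan_eq_centralBinom m
  have hcat₁ : ((m : ℝ) + 2) * catalan (m + 1) = centralBinom (m + 1) := by
    exact_mod_cast succ_mul_catalan_eq_centralBinom (m + 1)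
  have hcb₁ : ((m : ℝ) + 1) * centralBinom (m + 1) = 2 * (2 * m + 1) * centralBinom m := by
    exact_mod_cast Nat.succ_mul_centralBinom_succ m
  have hfac : ((m + 2)! : ℝ) = (m + 2) * ((m + 1) * m !) := by
    push_cast [Nat.factorial_succ]; ring
  simp only [peelP, show 2 * (m + 1) - 2 = 2 * m by omega, add_tsub_cancel_right, ht, hcb, hfac]
  field_simp
  push_cast
  rw [mul_pow]
  linear_combination 4 ^ (m + 1) * t ^ (m + 1) * (1 - α) *
    (-hcb₁ - 2 * (m + 2) * hcat₀ - (m + 1) * hcat₁)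

theorem hasSum_succ_mul_peelP_succ {α : ℝ} (hα : α ∈ Set.Ioo (2 / 3 : ℝ) 1) :
    HasSum (fun m : ℕ ↦ ((m + 1 : ℕ) : ℝ) * peelP α (m + 1)) (2 * α * pcrit α) := by
  obtain ⟨hα₁, hα₂⟩ := hα
  obtain ⟨t, ht_def⟩ : ∃ t, t = (1 - α) / (2 * α) := ⟨_, rfl⟩
  have hαt : 2 * α * t = 1 - α := by rw [ht_def]; field_simp
  have ht : 2 / α - 2 = 4 * t := by rw [ht_def]; field_simp; ring
  have ht₀ : 0 < t := by rw [ht_def]; exact div_pos (by linarith) (by linarith)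
  have ht₁ : |t| < 1 / 4 := by
    rw [abs_of_pos ht₀, ht_def, div_lt_iff₀ (by linarith)]
    linarith
  have hσ : 0 < 1 - 4 * t := by linarith [abs_lt.1 ht₁]
  have hσ₀ : 0 < √(1 - 4 * t) := Real.sqrt_pos.2 hσ
  have hσ₂ : √(1 - 4 * t) ^ 2 = 1 - 4 * t := Real.sq_sqrt hσ.le
  have hpc : pcrit α = (1 - √(1 - 4 * t)) / 2 := by
    rw [pcrit, show 3 - 2 / α = 1 - 4 * t by linarith]
    ring
  have hC := hasSum_catalan_mul_pow ht₁ ht₀.ne'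
  have hC' : HasSum (fun m ↦ (catalan (m + 1) : ℝ) * t ^ (m + 1))
      ((1 - √(1 - 4 * t)) / (2 * t) - 1) := by
    simpa using (hasSum_nat_add_iff' 1).2 hC
  have hval : 2 * α * pcrit α = 2 * (3 * α - 2) * t * (√(1 - 4 * t))⁻¹ +
      (1 - α) * (2 * t * ((1 - √(1 - 4 * t)) / (2 * t)) +
        ((1 - √(1 - 4 * t)) / (2 * t) - 1)) := by
    rw [hpc]
    field_simp
    linear_combination 4 * α * t ^ 2 * hσ₂ -
      (8 * t ^ 2 - √(1 - 4 * t) + (1 + 2 * t) * √(1 - 4 * t) ^ 2) * hαt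
  rw [hval]
  exact (((hasSum_centralBinom_mul_pow ht₁).mul_left _).add
    ((hC.mul_left (2 * t)).add hC' |>.mul_left (1 - α))).congr_fun (succ_mul_peelP_succ ht)

theorem hasSum_coe_mul_mul_one_sub_pow {q : ℝ} (hq : |1 - q| < 1) :
    HasSum (fun m : ℕ ↦ (m : ℝ) * (q * (1 - q) ^ m)) ((1 - q) / q) := by
  have hq₀ : q ≠ 0 := by rintro rfl; norm_num at hq
  have hval : (1 - q) / q = q * ((1 - q) / (1 - (1 - q)) ^ 2) := by
    rw [sub_sub_cancel]; field_simp
  rw [hval]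
  exact ((hasSum_coe_mul_geometric_of_norm_lt_one hq).mul_left q).congr_fun fun m ↦ by ring

theorem pcrit_pos {α : ℝ} (hα₀ : 0 < α) (hα₁ : α < 1) : 0 < pcrit α := by
  have h : 3 - 2 / α < 1 := by
    have : 2 < 2 / α := by rw [lt_div_iff₀ hα₀]; linarith
    linarith
  have : √(3 - 2 / α) < 1 := by
    rw [Real.sqrt_lt' one_pos]
    linarith
  rw [pcrit]
  linarith

/-- The two-type offspring distributions `μ∘(m) = p_m/(1-α)` (for `m ≥ 1`) and
`μ•(m) = q(1-q)^m` (for `m ≥ 0`, with `q = 2αp_c/(1-α+2αp_c)`) satisfy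
`∑ m μ∘(m) = 2αp_c/(1-α)`, `∑ m μ•(m) = (1-α)/(2αp_c)`, and the product of the two
means equals `1` (criticality). -/
theorem two_type_offspring_critical (α : ℝ) (hα : α ∈ Set.Ioo (2 / 3 : ℝ) 1) :
    let q : ℝ := 2 * α * pcrit α / (1 - α + 2 * α * pcrit α)
    HasSum (fun m : ℕ => ((m + 1 : ℕ) : ℝ) * (peelP α (m + 1) / (1 - α)))
      (2 * α * pcrit α / (1 - α)) ∧
    HasSum (fun m : ℕ => (m : ℝ) * (q * (1 - q) ^ m)) ((1 - α) / (2 * α * pcrit α)) ∧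
    (∑' m : ℕ, ((m + 1 : ℕ) : ℝ) * (peelP α (m + 1) / (1 - α))) *
      (∑' m : ℕ, (m : ℝ) * (q * (1 - q) ^ m)) = 1 := by
  intro q
  obtain ⟨hα₀, hα₁⟩ := hα
  have hpc := pcrit_pos (by linarith) hα₁
  have hmean₀ : HasSum (fun m : ℕ => ((m + 1 : ℕ) : ℝ) * (peelP α (m + 1) / (1 - α)))
      (2 * α * pcrit α / (1 - α)) := by
    simpa only [mul_div_assoc] using
      (hasSum_succ_mul_peelP_succ ⟨hα₀, hα₁⟩).div_const (1 - α)
  have hq₀ : 0 < q := by positivity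
  have hq₁ : q < 1 := (div_lt_one (by positivity)).2 (by linarith)
  have hmean₁ : HasSum (fun m : ℕ => (m : ℝ) * (q * (1 - q) ^ m))
      ((1 - α) / (2 * α * pcrit α)) := by
    have hval : (1 - α) / (2 * α * pcrit α) = (1 - q) / q := by
      simp only [q]
      field_simp
      ring
    rw [hval]
    exact hasSum_coe_mul_mul_one_sub_pow (abs_lt.2 ⟨by linarith, by linarith⟩)
  refine ⟨hmean₀, hmean₁, ?_⟩
  rw [hmean₀.tsum_eq, hmean₁.tsum_eq]
  field_simp
end
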